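/- Let d ≥ 1 and x ∈ ℝ^d with x_i > 0 for all i, and define f on the open positive orthant by f(x) = 1 + Σ_{i=1}^d (x_i − log x_i). Let ν and μ_1, …, μ_d be (nonnegative Borel) measures on ℝ^d, each concentrated on {z : z_j ≥ 0 for all j}, such that ∫ Σ_{j=1}^d z_j dν(z) < ∞ and, for each i, ∫ ( z_i + Σ_{j≠i} z_j ) dμ_i(z) < ∞. Then all the integrals below are well defined and ∫ ( f(x+z) − f(x) ) dν(z) + Σ_{i=1}^d x_i ∫ ( f(x+z) − f(x) − (1 − 1/x_i) z_i ) dμ_i(z) ≤ ∫ Σ_{i=1}^d z_i dν(z) + Σ_{i=1}^d ( x_i ∫ Σ_{j≠i} z_j dμ_i(z) + ∫ z_i dμ_i(z) ). -/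

import Mathlib

/-!
Coordinatewise, `t ↦ (a + t - log (a + t)) - (a - log a)` lies between `(1 - 1/a) t` and `t`
for `t ≥ 0`, by `log (1 + t/a) ≤ t/a` and monotonicity of `log`. So on the nonnegative orthant the
increment of `f` is sandwiched between two linear functions of the jump `z`, which gives the
integrability, and the upper bound `∑ j, z j` integrates to the right-hand side; in the `μ i`
term the compensator `(1 - 1/x i) z i` leaves `z i / x i`, which the factor `x i` turns into `z i`.
-/

open MeasureTheory Real BigOperators

lemma add_sub_log_add_sub_le {a t : ℝ} (ha : 0 < a) (ht : 0 ≤ t) :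
    a + t - log (a + t) - (a - log a) ≤ t := by
  have := log_le_log ha (le_add_of_nonneg_right ht)
  linarith

lemma one_sub_one_div_mul_le_add_sub_log_add_sub {a t : ℝ} (ha : 0 < a) (ht : 0 ≤ t) :
    (1 - 1 / a) * t ≤ a + t - log (a + t) - (a - log a) := by
  have hlog : log (a + t) - log a ≤ t / a := by
    rw [← log_div (by positivity) ha.ne']
    calc log ((a + t) / a) ≤ (a + t) / a - 1 := log_le_sub_one_of_pos (by positivity)
      _ = t / a := by field_simp; ring
  have : (1 - 1 / a) * t = t - t / a := by ring
  linarith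

section Lyapunov

variable {ι : Type*} [Fintype ι]

noncomputable def lyapunov (y : ι → ℝ) : ℝ := 1 + ∑ i, (y i - log (y i))

@[fun_prop]
lemma measurable_lyapunov : Measurable (lyapunov : (ι → ℝ) → ℝ) := by
  unfold lyapunov
  fun_prop

lemma lyapunov_add_sub_lyapunov (x z : ι → ℝ) :
    lyapunov (x + z) - lyapunov x = ∑ j, (x j + z j - log (x j + z j) - (x j - log (x j))) := by
  simp only [lyapunov, Pi.add_apply, add_sub_add_left_eq_sub, Finset.sum_sub_distrib]

variable {x z : ι → ℝ}

lemma lyapunov_add_sub_lyapunov_le (hx : ∀ j, 0 < x j) (hz : ∀ j, 0 ≤ z j) :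
    lyapunov (x + z) - lyapunov x ≤ ∑ j, z j := by
  rw [lyapunov_add_sub_lyapunov]
  exact Finset.sum_le_sum fun j _ => add_sub_log_add_sub_le (hx j) (hz j)

lemma sum_mul_le_lyapunov_add_sub_lyapunov (hx : ∀ j, 0 < x j) (hz : ∀ j, 0 ≤ z j) :
    ∑ j, (1 - 1 / x j) * z j ≤ lyapunov (x + z) - lyapunov x := by
  rw [lyapunov_add_sub_lyapunov]
  exact Finset.sum_le_sum fun j _ => one_sub_one_div_mul_le_add_sub_log_add_sub (hx j) (hz j)

variable {m : Measure (ι → ℝ)}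

lemma integrable_apply_of_integrable_sum (hm : ∀ᵐ z ∂m, ∀ j, 0 ≤ z j)
    (hsum : Integrable (fun z => ∑ j, z j) m) (i : ι) : Integrable (fun z => z i) m := by
  refine hsum.mono' (measurable_pi_apply i).aestronglyMeasurable ?_
  filter_upwards [hm] with z hz
  rw [norm_of_nonneg (hz i)]
  exact Finset.single_le_sum (fun j _ => hz j) (Finset.mem_univ i)

lemma integrable_lyapunov_add_sub_lyapunov (hx : ∀ j, 0 < x j) (hm : ∀ᵐ z ∂m, ∀ j, 0 ≤ z j)
    (hsum : Integrable (fun z => ∑ j, z j) m) :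
    Integrable (fun z => lyapunov (x + z) - lyapunov x) m :=
  integrable_of_le_of_le (Measurable.aestronglyMeasurable (by fun_prop))
    (hm.mono fun _ hz => sum_mul_le_lyapunov_add_sub_lyapunov hx hz)
    (hm.mono fun _ hz => lyapunov_add_sub_lyapunov_le hx hz)
    (integrable_finsetSum _ fun j _ =>
      (integrable_apply_of_integrable_sum hm hsum j).const_mul _)
    hsum

lemma mul_lyapunov_add_sub_lyapunov_sub_le [DecidableEq ι] (hx : ∀ j, 0 < x j)
    (hz : ∀ j, 0 ≤ z j) (i : ι) :
    x i * (lyapunov (x + z) - lyapunov x - (1 - 1 / x i) * z i)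
      ≤ x i * ∑ j ∈ Finset.univ.erase i, z j + z i := by
  have hle := lyapunov_add_sub_lyapunov_le hx hz
  rw [← Finset.add_sum_erase _ _ (Finset.mem_univ i)] at hle
  have hxi := hx i
  calc x i * (lyapunov (x + z) - lyapunov x - (1 - 1 / x i) * z i)
      ≤ x i * (z i / x i + ∑ j ∈ Finset.univ.erase i, z j) := by
        gcongr
        linarith [show (1 - 1 / x i) * z i = z i - z i / x i by ring]
    _ = x i * ∑ j ∈ Finset.univ.erase i, z j + z i := by field_simp; ring

lemma mul_integral_lyapunov_add_sub_lyapunov_sub_le [DecidableEq ι] (hx : ∀ j, 0 < x j)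
    (hm : ∀ᵐ z ∂m, ∀ j, 0 ≤ z j) (hsum : Integrable (fun z => ∑ j, z j) m) (i : ι) :
    x i * ∫ z, (lyapunov (x + z) - lyapunov x - (1 - 1 / x i) * z i) ∂m
      ≤ x i * ∫ z, (∑ j ∈ Finset.univ.erase i, z j) ∂m + ∫ z, z i ∂m := by
  have hcoord := integrable_apply_of_integrable_sum hm hsum
  have herase : Integrable (fun z => ∑ j ∈ Finset.univ.erase i, z j) m :=
    integrable_finsetSum _ fun j _ => hcoord j
  rw [← integral_const_mul, ← integral_const_mul, ← integral_add (herase.const_mul _) (hcoord i)]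
  refine integral_mono_ae
    (((integrable_lyapunov_add_sub_lyapunov hx hm hsum).sub ((hcoord i).const_mul _)).const_mul _)
    ((herase.const_mul _).add (hcoord i)) ?_
  filter_upwards [hm] with z hz
  exact mul_lyapunov_add_sub_lyapunov_sub_le hx hz i

end Lyapunov

theorem cimbi_nonlocal_generator_bound_general
    (d : ℕ) (x : Fin d → ℝ) (hx : ∀ i, 0 < x i)
    (f : (Fin d → ℝ) → ℝ)
    (hf : ∀ y : Fin d → ℝ, f y = 1 + ∑ i, (y i - Real.log (y i)))
    (ν : Measure (Fin d → ℝ)) (μ : Fin d → Measure (Fin d → ℝ))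
    (hν : ∀ᵐ z ∂ν, ∀ j, 0 ≤ z j)
    (hμ : ∀ i, ∀ᵐ z ∂(μ i), ∀ j, 0 ≤ z j)
    (hνint : Integrable (fun z => ∑ j, z j) ν)
    (hμint : ∀ i, Integrable
      (fun z => z i + ∑ j ∈ Finset.univ.erase i, z j) (μ i)) :
    Integrable (fun z => f (x + z) - f x) ν ∧
    (∀ i, Integrable (fun z => f (x + z) - f x - (1 - 1 / x i) * z i) (μ i)) ∧
    (∫ z, (f (x + z) - f x) ∂ν
        + ∑ i, x i * ∫ z, (f (x + z) - f x - (1 - 1 / x i) * z i) ∂(μ i)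
      ≤ ∫ z, (∑ i, z i) ∂ν
        + ∑ i, (x i * ∫ z, (∑ j ∈ Finset.univ.erase i, z j) ∂(μ i)
            + ∫ z, z i ∂(μ i))) := by
  obtain rfl : f = lyapunov := funext hf
  have hμsum (i : Fin d) : Integrable (fun z => ∑ j, z j) (μ i) := by
    simpa only [Finset.add_sum_erase _ _ (Finset.mem_univ i)] using hμint i
  have hνf := integrable_lyapunov_add_sub_lyapunov hx hν hνint
  refine ⟨hνf, fun i => ?_, ?_⟩
  · exact (integrable_lyapunov_add_sub_lyapunov hx (hμ i) (hμsum i)).sub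
      ((integrable_apply_of_integrable_sum (hμ i) (hμsum i) i).const_mul _)
  · refine add_le_add ?_ (Finset.sum_le_sum fun i _ =>
      mul_integral_lyapunov_add_sub_lyapunov_sub_le hx (hμ i) (hμsum i) i)
    exact integral_mono_ae hνf hνint (hν.mono fun _ hz => lyapunov_add_sub_lyapunov_le hx hz)

/-- Bound for the nonlocal (jump) part `L₂f(x)` of the generator of a CIMBI
process applied to the Lyapunov function `f(x) = 1 + Σᵢ (xᵢ − log xᵢ)`, in the
case where the branching Lévy measures have finite first moments. -/
theorem cimbi_nonlocal_generator_bound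
    (d : ℕ) (hd : 1 ≤ d) (x : Fin d → ℝ) (hx : ∀ i, 0 < x i)
    (f : (Fin d → ℝ) → ℝ)
    (hf : ∀ y : Fin d → ℝ, f y = 1 + ∑ i, (y i - Real.log (y i)))
    (ν : Measure (Fin d → ℝ)) (μ : Fin d → Measure (Fin d → ℝ))
    (hν : ∀ᵐ z ∂ν, ∀ j, 0 ≤ z j)
    (hμ : ∀ i, ∀ᵐ z ∂(μ i), ∀ j, 0 ≤ z j)
    (hνint : Integrable (fun z => ∑ j, z j) ν)
    (hμint : ∀ i, Integrable
      (fun z => z i + ∑ j ∈ Finset.univ.erase i, z j) (μ i)) :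
    Integrable (fun z => f (x + z) - f x) ν ∧
    (∀ i, Integrable (fun z => f (x + z) - f x - (1 - 1 / x i) * z i) (μ i)) ∧
    (∫ z, (f (x + z) - f x) ∂ν
        + ∑ i, x i * ∫ z, (f (x + z) - f x - (1 - 1 / x i) * z i) ∂(μ i)
      ≤ ∫ z, (∑ i, z i) ∂ν
        + ∑ i, (x i * ∫ z, (∑ j ∈ Finset.univ.erase i, z j) ∂(μ i)
            + ∫ z, z i ∂(μ i))) :=
  cimbi_nonlocal_generator_bound_general d x hx f hf ν μ hν hμ hνint hμint
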